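/- arXiv:2308.13708 — 2 statements merged into one kernel-verified Lean document; each statement's English description precedes it below -/
import Mathlib

section
/- There exists a constant c > 0 such that, as the real number x tends to infinity, (1/x⁵) times the number of pairs of integers (A,B) with |A| ≤ x², |B| ≤ x³, 4A³ + 27B² ≠ 0, and such that there is no prime p with p⁴ dividing A and p⁶ dividing B, converges to c. -/
open Filter ArithmeticFunction
open ArithmeticFunction
open scoped ArithmeticFunction.Moebius ArithmeticFunction.zeta

lemma pow_lcm_dvd {a d e : ℕ} (k : ℕ) (ha : a ≠ 0) (hd : d^k ∣ a) (he : e^k ∣ a) :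
    Nat.lcm d e ^ k ∣ a := by
  rcases Nat.eq_zero_or_pos k with rfl | hk
  · simpa using hd
  have hd0 : d ≠ 0 := by
    rintro rfl
    exact ha (zero_dvd_iff.mp (by rwa [zero_pow hk.ne'] at hd))
  have he0 : e ≠ 0 := by
    rintro rfl
    exact ha (zero_dvd_iff.mp (by rwa [zero_pow hk.ne'] at he))
  have hl0 : Nat.lcm d e ≠ 0 := Nat.lcm_ne_zero hd0 he0
  rw [← Nat.factorization_le_iff_dvd (pow_ne_zero _ hl0) ha]
  rw [← Nat.factorization_le_iff_dvd (pow_ne_zero _ hd0) ha] at hd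
  rw [← Nat.factorization_le_iff_dvd (pow_ne_zero _ he0) ha] at he
  intro p
  have hdp := hd p
  have hep := he p
  simp only [Nat.factorization_pow, Finsupp.coe_smul, Pi.smul_apply, smul_eq_mul] at *
  rw [Nat.factorization_lcm hd0 he0]
  simp only [Finsupp.sup_apply]
  rcases le_total (d.factorization p) (e.factorization p) with h | h
  · rw [sup_eq_right.mpr h]; exact hep
  · rw [sup_eq_left.mpr h]; exact hdp

lemma natcast_pow_dvd {d k : ℕ} {A : ℤ} : (d:ℤ)^k ∣ A ↔ d^k ∣ A.natAbs := by
  rw [← Int.natAbs_dvd_natAbs, Int.natAbs_pow]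
  simp

/-- membership condition -/
def Cond (A B : ℤ) (d : ℕ) : Prop := 0 < d ∧ (d:ℤ)^4 ∣ A ∧ (d:ℤ)^6 ∣ B

lemma cond_lcm {A B : ℤ} (h : ¬(A = 0 ∧ B = 0)) {d e : ℕ}
    (hd : Cond A B d) (he : Cond A B e) : Cond A B (Nat.lcm d e) := by
  obtain ⟨hd0, hd4, hd6⟩ := hd
  obtain ⟨he0, he4, he6⟩ := he
  refine ⟨Nat.pos_of_ne_zero (Nat.lcm_ne_zero hd0.ne' he0.ne'), ?_, ?_⟩
  · rcases eq_or_ne A 0 with rfl | hA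
    · exact dvd_zero _
    · rw [natcast_pow_dvd] at *
      exact pow_lcm_dvd 4 (Int.natAbs_ne_zero.mpr hA) hd4 he4
  · rcases eq_or_ne B 0 with rfl | hB
    · exact dvd_zero _
    · rw [natcast_pow_dvd] at *
      exact pow_lcm_dvd 6 (Int.natAbs_ne_zero.mpr hB) hd6 he6

lemma cond_le {A B : ℤ} (h : ¬(A = 0 ∧ B = 0)) {d : ℕ} (hd : Cond A B d) :
    d ≤ A.natAbs + B.natAbs := by
  obtain ⟨hd0, hd4, hd6⟩ := hd
  rcases eq_or_ne A 0 with rfl | hA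
  · rcases eq_or_ne B 0 with rfl | hB
    · exact absurd ⟨rfl, rfl⟩ h
    · have : d ∣ B.natAbs := dvd_trans (dvd_pow_self d (by norm_num)) (natcast_pow_dvd.mp hd6)
      exact le_add_left (Nat.le_of_dvd (Nat.pos_of_ne_zero (Int.natAbs_ne_zero.mpr hB)) this)
  · have : d ∣ A.natAbs := dvd_trans (dvd_pow_self d (by norm_num)) (natcast_pow_dvd.mp hd4)
    exact le_add_right (Nat.le_of_dvd (Nat.pos_of_ne_zero (Int.natAbs_ne_zero.mpr hA)) this)

lemma cond_of_dvd {A B : ℤ} {d m : ℕ} (hm : Cond A B m) (hdm : d ∣ m) : Cond A B d := by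
  obtain ⟨hm0, hm4, hm6⟩ := hm
  have hd4 : (d:ℤ)^4 ∣ (m:ℤ)^4 := pow_dvd_pow_of_dvd (Int.natCast_dvd_natCast.mpr hdm) 4
  have hd6 : (d:ℤ)^6 ∣ (m:ℤ)^6 := pow_dvd_pow_of_dvd (Int.natCast_dvd_natCast.mpr hdm) 6
  exact ⟨Nat.pos_of_dvd_of_pos hdm hm0, hd4.trans hm4, hd6.trans hm6⟩

open Classical in
lemma mobius_indicator {A B : ℤ} (h : ¬(A = 0 ∧ B = 0)) {M : ℕ}
    (hM : A.natAbs + B.natAbs ≤ M) :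
    (∑ d ∈ Finset.range (M+1), if Cond A B d then (μ d : ℤ) else 0)
      = if (¬∃ p : ℕ, p.Prime ∧ (p:ℤ)^4 ∣ A ∧ (p:ℤ)^6 ∣ B) then 1 else 0 := by
  classical
  rw [← Finset.sum_filter]
  set D := (Finset.range (M+1)).filter (Cond A B) with hD
  have memD : ∀ d, d ∈ D ↔ Cond A B d := by
    intro d
    simp only [hD, Finset.mem_filter, Finset.mem_range, Nat.lt_succ_iff]
    constructor
    · tauto
    · intro hc; exact ⟨le_trans (cond_le h hc) hM, hc⟩
  set m := D.lcm _root_.id with hm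
  have hcondm : Cond A B m := by
    have : ∀ s : Finset ℕ, (∀ d ∈ s, Cond A B d) → Cond A B (s.lcm _root_.id) := by
      intro s
      induction s using Finset.induction_on with
      | empty =>
          intro _
          rw [Finset.lcm_empty]
          exact ⟨one_pos, one_dvd _, one_dvd _⟩
      | insert _ _ hx ih =>
          intro hs
          rw [Finset.lcm_insert]
          exact cond_lcm h (hs _ (Finset.mem_insert_self _ _))
            (ih fun d hd => hs d (Finset.mem_insert_of_mem hd))
    exact this D (fun d hd => (memD d).mp hd)
  have hmne : m ≠ 0 := hcondm.1.ne'
  have hDdiv : D = m.divisors := by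
    ext d
    rw [Nat.mem_divisors, memD]
    constructor
    · intro hc
      exact ⟨Finset.dvd_lcm ((memD d).mpr hc), hmne⟩
    · rintro ⟨hdm, -⟩
      exact cond_of_dvd hcondm hdm
  rw [hDdiv]
  have hsum : ∑ d ∈ m.divisors, μ d = if m = 1 then 1 else 0 := by
    have : (μ * ζ : ArithmeticFunction ℤ) m = (1 : ArithmeticFunction ℤ) m := by
      rw [moebius_mul_coe_zeta]
    rw [coe_mul_zeta_apply, one_apply] at this
    exact this
  rw [hsum]
  congr 1
  simp only [eq_iff_iff]
  constructor
  · rintro hm1 ⟨p, hp, hp4, hp6⟩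
    have hpc : Cond A B p := ⟨hp.pos, hp4, hp6⟩
    have : p ∈ D := (memD p).mpr hpc
    rw [hDdiv, hm1] at this
    simp [Nat.divisors_one] at this
    exact hp.ne_one this
  · intro hnp
    by_contra hm1
    have h2 : 2 ≤ m := (Nat.two_le_iff m).mpr ⟨hmne, hm1⟩
    have hp : (m.minFac).Prime := Nat.minFac_prime hm1
    have hc : Cond A B m.minFac := cond_of_dvd hcondm (Nat.minFac_dvd m)
    exact hnp ⟨m.minFac, hp, hc.2.1, hc.2.2⟩

lemma card_mult_Icc (n q : ℤ) (hn : 0 ≤ n) (hq : 0 < q) :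
    (((Finset.Icc (-n) n).filter (fun A => q ∣ A)).card : ℤ) = 2 * (n / q) + 1 := by
  classical
  have himg : (Finset.Icc (-n) n).filter (fun A => q ∣ A)
      = Finset.image (fun a => q * a) (Finset.Icc (-(n/q)) (n/q)) := by
    ext A
    simp only [Finset.mem_filter, Finset.mem_Icc, Finset.mem_image]
    constructor
    · rintro ⟨⟨h1, h2⟩, c, rfl⟩
      refine ⟨c, ⟨?_, ?_⟩, rfl⟩
      · rw [neg_le, Int.le_ediv_iff_mul_le hq]
        nlinarith
      · rw [Int.le_ediv_iff_mul_le hq]; nlinarith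
    · rintro ⟨c, ⟨h1, h2⟩, rfl⟩
      rw [Int.le_ediv_iff_mul_le hq] at h2
      rw [neg_le, Int.le_ediv_iff_mul_le hq] at h1
      exact ⟨⟨by nlinarith, by nlinarith⟩, Dvd.intro _ rfl⟩
  rw [himg, Finset.card_image_of_injective _ (mul_right_injective₀ hq.ne')]
  rw [Int.card_Icc]
  have hD : 0 ≤ n / q := Int.ediv_nonneg hn hq.le
  rw [Int.toNat_of_nonneg (by linarith)]
  ring

lemma card_mult_bounds (y : ℝ) (hy : 0 ≤ y) (q : ℤ) (hq : 0 < q) :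
    2*y/(q:ℝ) - 3 ≤ (((Finset.Icc (-⌊y⌋) ⌊y⌋).filter (fun A => q ∣ A)).card : ℝ)
    ∧ (((Finset.Icc (-⌊y⌋) ⌊y⌋).filter (fun A => q ∣ A)).card : ℝ) ≤ 2*y/(q:ℝ) + 1 := by
  classical
  have hn : (0:ℤ) ≤ ⌊y⌋ := Int.floor_nonneg.mpr hy
  have hc := card_mult_Icc ⌊y⌋ q hn hq
  have hcr : ((((Finset.Icc (-⌊y⌋) ⌊y⌋).filter (fun A => q ∣ A)).card : ℝ))
      = 2*((⌊y⌋/q : ℤ):ℝ)+1 := by exact_mod_cast congrArg (fun z : ℤ => (z : ℝ)) hc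
  have h1 : q * (⌊y⌋/q) + ⌊y⌋ % q = ⌊y⌋ := Int.mul_ediv_add_emod _ _
  have h2 : (0:ℤ) ≤ ⌊y⌋ % q := Int.emod_nonneg _ hq.ne'
  have h3 : ⌊y⌋ % q < q := Int.emod_lt_of_pos _ hq
  have hq0 : (0:ℝ) < (q:ℝ) := by exact_mod_cast hq
  have hq1 : (1:ℝ) ≤ (q:ℝ) := by exact_mod_cast hq
  have hfl : ((⌊y⌋:ℤ):ℝ) ≤ y := Int.floor_le y
  have hfg : y - 1 < ((⌊y⌋:ℤ):ℝ) := Int.sub_one_lt_floor y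
  have h1r : (q:ℝ) * ((⌊y⌋/q : ℤ):ℝ) + ((⌊y⌋ % q : ℤ):ℝ) = ((⌊y⌋:ℤ):ℝ) := by exact_mod_cast h1
  have h2r : (0:ℝ) ≤ ((⌊y⌋ % q : ℤ):ℝ) := by exact_mod_cast h2
  have h3r : ((⌊y⌋ % q : ℤ):ℝ) < (q:ℝ) := by exact_mod_cast h3
  constructor
  · rw [hcr, sub_le_iff_le_add, div_le_iff₀ hq0]; nlinarith
  · rw [hcr]
    have hD : ((⌊y⌋/q : ℤ):ℝ) ≤ y/(q:ℝ) := by rw [le_div_iff₀ hq0]; nlinarith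
    have : 2*((⌊y⌋/q : ℤ):ℝ) ≤ 2*y/(q:ℝ) := by rw [mul_div_assoc]; linarith
    linarith

open Classical in
noncomputable def Box (x : ℝ) : Finset (ℤ × ℤ) :=
  Finset.Icc (-⌊x^2⌋) ⌊x^2⌋ ×ˢ Finset.Icc (-⌊x^3⌋) ⌊x^3⌋

open Classical in
noncomputable def Bd (d : ℕ) (x : ℝ) : Finset (ℤ × ℤ) :=
  (Box x).filter (fun AB => (4*AB.1^3+27*AB.2^2 ≠ 0) ∧ Cond AB.1 AB.2 d)

open Classical in
noncomputable def NN (x : ℝ) : Finset (ℤ × ℤ) :=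
  (Box x).filter (fun AB => 4*AB.1^3+27*AB.2^2 ≠ 0 ∧
    ¬∃ p : ℕ, p.Prime ∧ (p:ℤ)^4 ∣ AB.1 ∧ (p:ℤ)^6 ∣ AB.2)

lemma natAbs_le_of_mem_Icc {A : ℤ} {n : ℤ} (h : A ∈ Finset.Icc (-n) n) :
    A.natAbs ≤ n.toNat := by
  rw [Finset.mem_Icc] at h
  omega

lemma not_both_zero {A B : ℤ} (h : 4*A^3+27*B^2 ≠ 0) : ¬(A = 0 ∧ B = 0) := by
  rintro ⟨rfl, rfl⟩; simp at h

lemma main_identity (x : ℝ) :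
    ((NN x).card : ℤ) = ∑ d ∈ Finset.range (⌊x^2⌋.toNat + ⌊x^3⌋.toNat + 1),
      (μ d : ℤ) * ((Bd d x).card : ℤ) := by
  classical
  set M := ⌊x^2⌋.toNat + ⌊x^3⌋.toNat with hM
  set S := (Box x).filter (fun AB : ℤ × ℤ => 4*AB.1^3+27*AB.2^2 ≠ 0) with hS
  have hNN : (NN x).card = (S.filter (fun AB : ℤ × ℤ =>
      ¬∃ p : ℕ, p.Prime ∧ (p:ℤ)^4 ∣ AB.1 ∧ (p:ℤ)^6 ∣ AB.2)).card := by
    rw [hS, Finset.filter_filter]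
    rfl
  rw [hNN]
  have hcard : ((S.filter (fun AB : ℤ × ℤ =>
      ¬∃ p : ℕ, p.Prime ∧ (p:ℤ)^4 ∣ AB.1 ∧ (p:ℤ)^6 ∣ AB.2)).card : ℤ)
      = ∑ AB ∈ S, (if ¬∃ p : ℕ, p.Prime ∧ (p:ℤ)^4 ∣ AB.1 ∧ (p:ℤ)^6 ∣ AB.2
          then (1:ℤ) else 0) := by
    rw [Finset.card_filter]
    push_cast
    rfl
  rw [hcard]
  have hstep : ∀ AB ∈ S, (if ¬∃ p : ℕ, p.Prime ∧ (p:ℤ)^4 ∣ AB.1 ∧ (p:ℤ)^6 ∣ AB.2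
      then (1:ℤ) else 0)
      = ∑ d ∈ Finset.range (M+1), (if Cond AB.1 AB.2 d then (μ d : ℤ) else 0) := by
    intro AB hAB
    rw [hS, Finset.mem_filter] at hAB
    obtain ⟨hbox, hdisc⟩ := hAB
    have h0 : ¬(AB.1 = 0 ∧ AB.2 = 0) := not_both_zero hdisc
    rw [Box, Finset.mem_product] at hbox
    have hMle : AB.1.natAbs + AB.2.natAbs ≤ M := by
      rw [hM]
      exact Nat.add_le_add (natAbs_le_of_mem_Icc hbox.1) (natAbs_le_of_mem_Icc hbox.2)
    rw [mobius_indicator h0 hMle]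
  rw [Finset.sum_congr rfl hstep, Finset.sum_comm]
  refine Finset.sum_congr rfl ?_
  intro d _
  rw [← Finset.sum_filter]
  rw [Finset.sum_const]
  have : S.filter (fun AB : ℤ × ℤ => Cond AB.1 AB.2 d) = Bd d x := by
    rw [hS, Finset.filter_filter]
    rfl
  rw [this, nsmul_eq_mul, mul_comm]

open Classical in
noncomputable def BoxD (d : ℕ) (x : ℝ) : Finset (ℤ × ℤ) :=
  (Box x).filter (fun AB => Cond AB.1 AB.2 d)

open Classical in
noncomputable def Ed (d : ℕ) (x : ℝ) : Finset (ℤ × ℤ) :=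
  (BoxD d x).filter (fun AB => 4*AB.1^3+27*AB.2^2 = 0)

open Classical in
noncomputable def cardA (d : ℕ) (x : ℝ) : ℕ :=
  ((Finset.Icc (-⌊x^2⌋) ⌊x^2⌋).filter (fun A => ((d:ℤ))^4 ∣ A)).card

open Classical in
noncomputable def cardB (d : ℕ) (x : ℝ) : ℕ :=
  ((Finset.Icc (-⌊x^3⌋) ⌊x^3⌋).filter (fun B => ((d:ℤ))^6 ∣ B)).card

lemma Bd_eq (d : ℕ) (x : ℝ) :
    Bd d x = (BoxD d x).filter (fun AB => ¬(4*AB.1^3+27*AB.2^2 = 0)) := by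
  classical
  rw [Bd, BoxD, Finset.filter_filter]
  apply Finset.filter_congr
  intro AB _
  constructor
  · tauto
  · tauto

lemma card_split (d : ℕ) (x : ℝ) :
    (Bd d x).card + (Ed d x).card = (BoxD d x).card := by
  classical
  rw [Bd_eq, Ed]
  rw [add_comm]
  exact Finset.card_filter_add_card_filter_not _

lemma BoxD_card (d : ℕ) (hd : 0 < d) (x : ℝ) :
    (BoxD d x).card = cardA d x * cardB d x := by
  classical
  have : BoxD d x = ((Finset.Icc (-⌊x^2⌋) ⌊x^2⌋).filter (fun A => ((d:ℤ))^4 ∣ A)) ×ˢ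
      ((Finset.Icc (-⌊x^3⌋) ⌊x^3⌋).filter (fun B => ((d:ℤ))^6 ∣ B)) := by
    rw [BoxD, Box, ← Finset.filter_product]
    apply Finset.filter_congr
    intro AB _
    simp only [Cond]
    constructor
    · tauto
    · intro h; exact ⟨hd, h⟩
  rw [this, Finset.card_product, cardA, cardB]

lemma Ed_card_le (d : ℕ) (x : ℝ) : (Ed d x).card ≤ 2 * cardA d x := by
  classical
  have hsub : Ed d x ⊆ BoxD d x := Finset.filter_subset _ _
  have himg : (Ed d x).image Prod.fst ⊆
      (Finset.Icc (-⌊x^2⌋) ⌊x^2⌋).filter (fun A => ((d:ℤ))^4 ∣ A) := by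
    intro A hA
    rw [Finset.mem_image] at hA
    obtain ⟨AB, hAB, rfl⟩ := hA
    have h1 := hsub hAB
    rw [BoxD, Finset.mem_filter] at h1
    obtain ⟨hbox, hcond⟩ := h1
    rw [Box, Finset.mem_product] at hbox
    rw [Finset.mem_filter]
    exact ⟨hbox.1, hcond.2.1⟩
  have hle : (Ed d x).card ≤ 2 * ((Ed d x).image Prod.fst).card := by
    apply Finset.card_le_mul_card_image
    intro A₀ hA₀
    set t := (Ed d x).filter (fun AB => AB.1 = A₀) with ht
    rcases t.eq_empty_or_nonempty with he | ⟨⟨a₀, b₀⟩, hm⟩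
    · rw [he]; simp
    · have hmem : (a₀, b₀) ∈ Ed d x ∧ a₀ = A₀ := by
        rw [ht, Finset.mem_filter] at hm; exact hm
      have heq0 : 4*a₀^3+27*b₀^2 = 0 := by
        have := hmem.1
        rw [Ed, Finset.mem_filter] at this
        exact this.2
      have hsub2 : t ⊆ {(A₀, b₀), (A₀, -b₀)} := by
        rintro ⟨a, b⟩ hab
        rw [ht, Finset.mem_filter] at hab
        obtain ⟨habE, ha⟩ := hab
        have heq : 4*a^3+27*b^2 = 0 := by
          rw [Ed, Finset.mem_filter] at habE
          exact habE.2
        simp only at ha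
        subst ha
        have ha₀ : a₀ = a := hmem.2
        subst ha₀
        have hb2 : b^2 = b₀^2 := by nlinarith [heq0, heq]
        have : (b - b₀) * (b + b₀) = 0 := by linear_combination hb2
        rcases mul_eq_zero.mp this with h | h
        · have : b = b₀ := by linarith
          subst this
          simp
        · have : b = -b₀ := by linarith
          subst this
          simp
      calc t.card ≤ ({(A₀, b₀), (A₀, -b₀)} : Finset (ℤ × ℤ)).card :=
            Finset.card_le_card hsub2
        _ ≤ 2 := Finset.card_insert_le _ _ |>.trans (by simp)
  calc (Ed d x).card ≤ 2 * ((Ed d x).image Prod.fst).card := hle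
    _ ≤ 2 * cardA d x := by
        apply Nat.mul_le_mul_left
        exact Finset.card_le_card himg

lemma Bd_empty_nat {d : ℕ} {x : ℝ} (hd : ⌊x^2⌋.toNat + ⌊x^3⌋.toNat < d) :
    Bd d x = ∅ := by
  classical
  rw [Finset.eq_empty_iff_forall_notMem]
  intro AB hAB
  rw [Bd, Finset.mem_filter] at hAB
  obtain ⟨hbox, hdisc, hcond⟩ := hAB
  rw [Box, Finset.mem_product] at hbox
  have h0 := not_both_zero hdisc
  have := cond_le h0 hcond
  have h1 := natAbs_le_of_mem_Icc hbox.1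
  have h2 := natAbs_le_of_mem_Icc hbox.2
  omega

lemma sq_le_of_mem_Bd {d : ℕ} {x : ℝ} {AB : ℤ × ℤ} (hx : 0 ≤ x) (hAB : AB ∈ Bd d x) :
    ((d:ℝ))^2 ≤ x := by
  classical
  rw [Bd, Finset.mem_filter] at hAB
  obtain ⟨hbox, hdisc, hcond⟩ := hAB
  rw [Box, Finset.mem_product, Finset.mem_Icc, Finset.mem_Icc] at hbox
  have h0 := not_both_zero hdisc
  obtain ⟨hd0, hd4, hd6⟩ := hcond
  rcases eq_or_ne AB.1 0 with hA | hA
  · have hB : AB.2 ≠ 0 := fun hB => h0 ⟨hA, hB⟩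
    have hdvd : ((d:ℤ))^6 ≤ |AB.2| := Int.le_of_dvd (abs_pos.mpr hB) ((dvd_abs _ _).mpr hd6)
    have habs : |AB.2| ≤ ⌊x^3⌋ := abs_le.mpr hbox.2
    have hr : ((d:ℝ))^6 ≤ x^3 := by
      have h1 : (((d:ℤ))^6 : ℤ) ≤ ⌊x^3⌋ := le_trans hdvd habs
      calc ((d:ℝ))^6 = (((d:ℤ))^6 : ℤ) := by push_cast; ring
        _ ≤ (⌊x^3⌋ : ℝ) := by exact_mod_cast h1
        _ ≤ x^3 := Int.floor_le _
    have : (((d:ℝ))^2)^3 ≤ x^3 := by rw [← pow_mul]; exact hr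
    exact le_of_pow_le_pow_left₀ (by norm_num) hx this
  · have hdvd : ((d:ℤ))^4 ≤ |AB.1| := Int.le_of_dvd (abs_pos.mpr hA) ((dvd_abs _ _).mpr hd4)
    have habs : |AB.1| ≤ ⌊x^2⌋ := abs_le.mpr hbox.1
    have hr : ((d:ℝ))^4 ≤ x^2 := by
      have h1 : (((d:ℤ))^4 : ℤ) ≤ ⌊x^2⌋ := le_trans hdvd habs
      calc ((d:ℝ))^4 = (((d:ℤ))^4 : ℤ) := by push_cast; ring
        _ ≤ (⌊x^2⌋ : ℝ) := by exact_mod_cast h1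
        _ ≤ x^2 := Int.floor_le _
    have : (((d:ℝ))^2)^2 ≤ x^2 := by rw [← pow_mul]; exact hr
    exact le_of_pow_le_pow_left₀ (by norm_num) hx this

lemma cardA_bounds {d : ℕ} (hd : 0 < d) {x : ℝ} (hx : 0 ≤ x) :
    2*x^2/((d:ℝ))^4 - 3 ≤ (cardA d x : ℝ) ∧ (cardA d x : ℝ) ≤ 2*x^2/((d:ℝ))^4 + 1 := by
  have hq : (0:ℤ) < ((d:ℤ))^4 := by positivity
  have := card_mult_bounds (x^2) (by positivity) (((d:ℤ))^4) hq
  rw [cardA]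
  convert this using 3 <;> push_cast <;> ring

lemma cardB_bounds {d : ℕ} (hd : 0 < d) {x : ℝ} (hx : 0 ≤ x) :
    2*x^3/((d:ℝ))^6 - 3 ≤ (cardB d x : ℝ) ∧ (cardB d x : ℝ) ≤ 2*x^3/((d:ℝ))^6 + 1 := by
  have hq : (0:ℤ) < ((d:ℤ))^6 := by positivity
  have h3 : (0:ℝ) ≤ x^3 := by positivity
  have := card_mult_bounds (x^3) h3 (((d:ℤ))^6) hq
  rw [cardB]
  convert this using 3 <;> push_cast <;> ring


lemma my_tendsto_const_div_pow (c : ℝ) (k : ℕ) (hk : k ≠ 0) :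
    Tendsto (fun x : ℝ => c / x^k) atTop (nhds 0) :=
  Tendsto.div_atTop (tendsto_const_nhds) (tendsto_pow_atTop hk)

lemma tendsto_cardA (d : ℕ) (hd : 0 < d) :
    Tendsto (fun x : ℝ => (cardA d x : ℝ) / x^2) atTop (nhds (2 / ((d:ℝ))^4)) := by
  have hq : (0:ℝ) < ((d:ℝ))^4 := by positivity
  have h1 : Tendsto (fun x : ℝ => 2/((d:ℝ))^4 - 3/x^2) atTop (nhds (2 / ((d:ℝ))^4)) := by
    simpa using tendsto_const_nhds.sub (my_tendsto_const_div_pow 3 2 (by norm_num))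
  have h2 : Tendsto (fun x : ℝ => 2/((d:ℝ))^4 + 1/x^2) atTop (nhds (2 / ((d:ℝ))^4)) := by
    simpa using tendsto_const_nhds.add (my_tendsto_const_div_pow 1 2 (by norm_num))
  refine tendsto_of_tendsto_of_tendsto_of_le_of_le' h1 h2 ?_ ?_
  · filter_upwards [eventually_ge_atTop (1:ℝ)] with x hx
    have hx2 : (0:ℝ) < x^2 := by positivity
    have hb := (cardA_bounds hd (by linarith : (0:ℝ) ≤ x)).1
    have h5 : (2*x^2/((d:ℝ))^4 - 3)/x^2 ≤ (cardA d x : ℝ)/x^2 :=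
      (div_le_div_iff_of_pos_right hx2).mpr hb
    have h6 : 2/((d:ℝ))^4 - 3/x^2 = (2*x^2/((d:ℝ))^4 - 3)/x^2 := by
      field_simp
    rw [h6]; exact h5
  · filter_upwards [eventually_ge_atTop (1:ℝ)] with x hx
    have hx2 : (0:ℝ) < x^2 := by positivity
    have hb := (cardA_bounds hd (by linarith : (0:ℝ) ≤ x)).2
    calc (cardA d x : ℝ)/x^2 ≤ (2*x^2/((d:ℝ))^4 + 1)/x^2 :=
          (div_le_div_iff_of_pos_right hx2).mpr hb
      _ = 2/((d:ℝ))^4 + 1/x^2 := by field_simp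

lemma tendsto_cardB (d : ℕ) (hd : 0 < d) :
    Tendsto (fun x : ℝ => (cardB d x : ℝ) / x^3) atTop (nhds (2 / ((d:ℝ))^6)) := by
  have hq : (0:ℝ) < ((d:ℝ))^6 := by positivity
  have h1 : Tendsto (fun x : ℝ => 2/((d:ℝ))^6 - 3/x^3) atTop (nhds (2 / ((d:ℝ))^6)) := by
    simpa using tendsto_const_nhds.sub (my_tendsto_const_div_pow 3 3 (by norm_num))
  have h2 : Tendsto (fun x : ℝ => 2/((d:ℝ))^6 + 1/x^3) atTop (nhds (2 / ((d:ℝ))^6)) := by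
    simpa using tendsto_const_nhds.add (my_tendsto_const_div_pow 1 3 (by norm_num))
  refine tendsto_of_tendsto_of_tendsto_of_le_of_le' h1 h2 ?_ ?_
  · filter_upwards [eventually_ge_atTop (1:ℝ)] with x hx
    have hx3 : (0:ℝ) < x^3 := by positivity
    have hb := (cardB_bounds hd (by linarith : (0:ℝ) ≤ x)).1
    calc 2/((d:ℝ))^6 - 3/x^3 = (2*x^3/((d:ℝ))^6 - 3)/x^3 := by field_simp
      _ ≤ (cardB d x : ℝ)/x^3 := (div_le_div_iff_of_pos_right hx3).mpr hb
  · filter_upwards [eventually_ge_atTop (1:ℝ)] with x hx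
    have hx3 : (0:ℝ) < x^3 := by positivity
    have hb := (cardB_bounds hd (by linarith : (0:ℝ) ≤ x)).2
    calc (cardB d x : ℝ)/x^3 ≤ (2*x^3/((d:ℝ))^6 + 1)/x^3 :=
          (div_le_div_iff_of_pos_right hx3).mpr hb
      _ = 2/((d:ℝ))^6 + 1/x^3 := by field_simp

lemma tendsto_Ed (d : ℕ) (hd : 0 < d) :
    Tendsto (fun x : ℝ => ((Ed d x).card : ℝ) / x^5) atTop (nhds 0) := by
  have h2 : Tendsto (fun x : ℝ => 4/x^3 + 6/x^5) atTop (nhds 0) := by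
    simpa using (my_tendsto_const_div_pow 4 3 (by norm_num)).add
      (my_tendsto_const_div_pow 6 5 (by norm_num))
  refine tendsto_of_tendsto_of_tendsto_of_le_of_le' tendsto_const_nhds h2 ?_ ?_
  · filter_upwards [eventually_ge_atTop (1:ℝ)] with x hx
    positivity
  · filter_upwards [eventually_ge_atTop (1:ℝ)] with x hx
    have hx5 : (0:ℝ) < x^5 := by positivity
    have hd4 : (1:ℝ) ≤ ((d:ℝ))^4 := by
      have : (1:ℝ) ≤ (d:ℝ) := by exact_mod_cast hd
      exact one_le_pow₀ this
    have hb := (cardA_bounds hd (by linarith : (0:ℝ) ≤ x)).2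
    have hE : ((Ed d x).card : ℝ) ≤ 2 * (cardA d x : ℝ) := by
      exact_mod_cast Ed_card_le d x
    have hcA : (cardA d x : ℝ) ≤ 2*x^2 + 1 := by
      have : 2*x^2/((d:ℝ))^4 ≤ 2*x^2 := by
        rw [div_le_iff₀ (by positivity)]
        nlinarith [sq_nonneg x]
      linarith
    have : ((Ed d x).card : ℝ) ≤ 4*x^2 + 2 := by linarith
    calc ((Ed d x).card : ℝ)/x^5 ≤ (4*x^2 + 2)/x^5 :=
          (div_le_div_iff_of_pos_right hx5).mpr this
      _ ≤ 4/x^3 + 6/x^5 := by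
          have hx0 : (0:ℝ) < x := by linarith
          rw [div_add_div _ _ (by positivity) (by positivity), div_le_div_iff₀ hx5 (by positivity)]
          ring_nf
          nlinarith [pow_pos hx0 3, pow_pos hx0 5, pow_pos hx0 8, pow_pos hx0 10,
            pow_le_pow_right₀ hx (by norm_num : (8:ℕ) ≤ 10)]


lemma tendsto_Bd_card (d : ℕ) (hd : 0 < d) :
    Tendsto (fun x : ℝ => ((Bd d x).card : ℝ) / x^5) atTop (nhds (4 / ((d:ℝ))^10)) := by
  have hd0 : ((d:ℝ)) ≠ 0 := by positivity
  have hmain : Tendsto (fun x : ℝ =>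
      (cardA d x : ℝ)/x^2 * ((cardB d x : ℝ)/x^3) - ((Ed d x).card : ℝ)/x^5) atTop
      (nhds (2/((d:ℝ))^4 * (2/((d:ℝ))^6) - 0)) :=
    ((tendsto_cardA d hd).mul (tendsto_cardB d hd)).sub (tendsto_Ed d hd)
  have hval : 2/((d:ℝ))^4 * (2/((d:ℝ))^6) - 0 = 4 / ((d:ℝ))^10 := by
    field_simp
    ring
  rw [hval] at hmain
  apply hmain.congr'
  filter_upwards [eventually_ge_atTop (1:ℝ)] with x hx
  have hx0 : x ≠ 0 := by intro h; rw [h] at hx; norm_num at hx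
  have hsplit := card_split d x
  have hbox := BoxD_card d hd x
  have hBd : ((Bd d x).card : ℝ) = (cardA d x : ℝ) * (cardB d x : ℝ) - ((Ed d x).card : ℝ) := by
    have hn : (Bd d x).card + (Ed d x).card = cardA d x * cardB d x := hsplit.trans hbox
    have : ((Bd d x).card : ℝ) + ((Ed d x).card : ℝ) = (cardA d x : ℝ) * (cardB d x : ℝ) := by
      exact_mod_cast hn
    linarith
  rw [hBd]
  field_simp

noncomputable def fterm (d : ℕ) (x : ℝ) : ℝ := (μ d : ℝ) * ((Bd d x).card : ℝ) / x^5

noncomputable def aterm (d : ℕ) : ℝ := 4 * (μ d : ℝ) / ((d:ℝ))^10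

lemma tendsto_fterm (d : ℕ) : Tendsto (fterm d) atTop (nhds (aterm d)) := by
  rcases Nat.eq_zero_or_pos d with rfl | hd
  · have hf : fterm 0 = fun _ => (0:ℝ) := by
      funext x
      simp [fterm]
    have ha : aterm 0 = 0 := by simp [aterm]
    rw [hf, ha]
    exact tendsto_const_nhds
  · have := (tendsto_Bd_card d hd).const_mul ((μ d : ℝ))
    have hval : (μ d : ℝ) * (4 / ((d:ℝ))^10) = aterm d := by rw [aterm]; ring
    rw [hval] at this
    apply this.congr
    intro x
    rw [fterm, mul_div_assoc]

lemma abs_moebius_le_one (n : ℕ) : |(μ n : ℤ)| ≤ 1 := by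
  by_cases h : Squarefree n
  · rw [ArithmeticFunction.moebius_apply_of_squarefree h]
    rw [abs_pow, abs_neg, abs_one, one_pow]
  · rw [ArithmeticFunction.moebius_eq_zero_of_not_squarefree h]
    norm_num

lemma fterm_bound : ∀ᶠ x in (atTop : Filter ℝ), ∀ d : ℕ, |fterm d x| ≤ 9 / ((d:ℝ))^10 := by
  filter_upwards [eventually_ge_atTop (1:ℝ)] with x hx
  intro d
  rcases Nat.eq_zero_or_pos d with rfl | hd
  · simp [fterm]
  have hx0 : (0:ℝ) < x := by linarith
  have hd0 : (0:ℝ) < (d:ℝ) := by exact_mod_cast hd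
  have hmu : |(μ d : ℝ)| ≤ 1 := by exact_mod_cast abs_moebius_le_one d
  have hcard : |fterm d x| ≤ ((Bd d x).card : ℝ) / x^5 := by
    rw [fterm, abs_div, abs_of_pos (by positivity : (0:ℝ) < x^5), abs_mul]
    have h1 : |((μ d : ℤ) : ℝ)| * |((Bd d x).card : ℝ)| ≤ 1 * ((Bd d x).card : ℝ) := by
      apply mul_le_mul hmu (le_of_eq (abs_of_nonneg (by positivity))) (abs_nonneg _) zero_le_one
    rw [one_mul] at h1
    exact div_le_div_of_nonneg_right h1 (by positivity)
  by_cases hle : ((d:ℝ))^2 ≤ x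
  · -- Bd card ≤ 9 x^5 / d^10
    have hA4 : ((d:ℝ))^4 ≤ x^2 := by
      calc ((d:ℝ))^4 = (((d:ℝ))^2)^2 := by ring
        _ ≤ x^2 := by apply pow_le_pow_left₀ (by positivity) hle
    have hB6 : ((d:ℝ))^6 ≤ x^3 := by
      calc ((d:ℝ))^6 = (((d:ℝ))^2)^3 := by ring
        _ ≤ x^3 := by apply pow_le_pow_left₀ (by positivity) hle
    have hsub : (Bd d x).card ≤ cardA d x * cardB d x := by
      rw [← BoxD_card d hd x]
      apply Finset.card_le_card
      rw [Bd_eq]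
      exact Finset.filter_subset _ _
    have hcA := (cardA_bounds hd (by linarith : (0:ℝ) ≤ x)).2
    have hcB := (cardB_bounds hd (by linarith : (0:ℝ) ≤ x)).2
    have hq4 : (0:ℝ) < ((d:ℝ))^4 := by positivity
    have hq6 : (0:ℝ) < ((d:ℝ))^6 := by positivity
    have h1A : (1:ℝ) ≤ x^2/((d:ℝ))^4 := (one_le_div hq4).mpr hA4
    have h1B : (1:ℝ) ≤ x^3/((d:ℝ))^6 := (one_le_div hq6).mpr hB6
    have hcA3 : (cardA d x : ℝ) ≤ 3 * (x^2/((d:ℝ))^4) := by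
      have : 2*x^2/((d:ℝ))^4 = 2*(x^2/((d:ℝ))^4) := by ring
      rw [this] at hcA
      linarith
    have hcB3 : (cardB d x : ℝ) ≤ 3 * (x^3/((d:ℝ))^6) := by
      have : 2*x^3/((d:ℝ))^6 = 2*(x^3/((d:ℝ))^6) := by ring
      rw [this] at hcB
      linarith
    have hprod : ((Bd d x).card : ℝ) ≤ 9 * (x^2/((d:ℝ))^4) * (x^3/((d:ℝ))^6) := by
      calc ((Bd d x).card : ℝ) ≤ (cardA d x : ℝ) * (cardB d x : ℝ) := by exact_mod_cast hsub
        _ ≤ (3 * (x^2/((d:ℝ))^4)) * (3 * (x^3/((d:ℝ))^6)) := by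
            apply mul_le_mul hcA3 hcB3 (by positivity) (by linarith)
        _ = 9 * (x^2/((d:ℝ))^4) * (x^3/((d:ℝ))^6) := by ring
    calc |fterm d x| ≤ ((Bd d x).card : ℝ) / x^5 := hcard
      _ ≤ (9 * (x^2/((d:ℝ))^4) * (x^3/((d:ℝ))^6)) / x^5 :=
          div_le_div_of_nonneg_right hprod (by positivity)
      _ = 9 / ((d:ℝ))^10 := by field_simp
  · have hempty : Bd d x = ∅ := by
      rw [Finset.eq_empty_iff_forall_notMem]
      intro AB hAB
      exact hle (sq_le_of_mem_Bd (by linarith : (0:ℝ) ≤ x) hAB)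
    have : fterm d x = 0 := by rw [fterm, hempty]; simp
    rw [this, abs_zero]
    positivity

lemma tsum_fterm {x : ℝ} (hx : 1 ≤ x) :
    ((NN x).card : ℝ) / x^5 = ∑' d, fterm d x := by
  classical
  have hzero : ∀ d ∉ Finset.range (⌊x^2⌋.toNat + ⌊x^3⌋.toNat + 1), fterm d x = 0 := by
    intro d hd
    rw [Finset.mem_range, not_lt] at hd
    have : Bd d x = ∅ := Bd_empty_nat (by omega)
    rw [fterm, this]
    simp
  rw [tsum_eq_sum hzero]
  have hid := main_identity x
  have hR : ((NN x).card : ℝ) = ∑ d ∈ Finset.range (⌊x^2⌋.toNat + ⌊x^3⌋.toNat + 1),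
      (μ d : ℝ) * ((Bd d x).card : ℝ) := by
    exact_mod_cast congrArg (fun z : ℤ => (z : ℝ)) hid
  rw [hR, Finset.sum_div]
  exact Finset.sum_congr rfl (fun i _ => rfl)

lemma summable_bound : Summable (fun d : ℕ => 9/((d:ℝ))^10) := by
  have h := Real.summable_one_div_nat_pow.mpr (by norm_num : 1 < 10)
  exact (h.mul_left 9).congr (fun n => by rw [mul_one_div])

lemma abs_aterm_le (d : ℕ) : |aterm d| ≤ 4 / ((d:ℝ))^10 := by
  rcases Nat.eq_zero_or_pos d with rfl | hd
  · simp [aterm]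
  have hd0 : (0:ℝ) < ((d:ℝ))^10 := by positivity
  have hmu : |(μ d : ℝ)| ≤ 1 := by exact_mod_cast abs_moebius_le_one d
  rw [aterm, abs_div, abs_of_pos hd0]
  apply (div_le_div_iff_of_pos_right hd0).mpr
  rw [abs_mul]
  calc |(4:ℝ)| * |(μ d : ℝ)| ≤ 4 * 1 := by
        apply mul_le_mul (by norm_num) hmu (abs_nonneg _) (by norm_num)
    _ = 4 := by norm_num

lemma summable_aterm : Summable aterm := by
  apply Summable.of_norm_bounded summable_bound
  intro d
  rw [Real.norm_eq_abs]
  refine (abs_aterm_le d).trans ?_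
  rcases Nat.eq_zero_or_pos d with rfl | hd
  · norm_num
  · have : (0:ℝ) < ((d:ℝ))^10 := by positivity
    exact (div_le_div_iff_of_pos_right this).mpr (by norm_num)

lemma tail_bound : |∑' d : ℕ, aterm (d+2)| ≤ 2 := by
  have hsum2 : Summable (fun d : ℕ => aterm (d+2)) := by
    exact (summable_nat_add_iff 2).mpr summable_aterm
  have h1 : |∑' d : ℕ, aterm (d+2)| ≤ ∑' d : ℕ, |aterm (d+2)| := by
    have := norm_tsum_le_tsum_norm (f := fun d : ℕ => aterm (d+2)) ?_
    · simpa [Real.norm_eq_abs] using this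
    · simpa [Real.norm_eq_abs] using ((summable_nat_add_iff 2).mpr summable_aterm).abs
  refine h1.trans ?_
  apply Real.tsum_le_of_sum_range_le (fun n => abs_nonneg _)
  intro n
  have hterm : ∀ i : ℕ, |aterm (i+2)| ≤ 2/((i:ℝ)+1) - 2/((i:ℝ)+2) := by
    intro i
    refine (abs_aterm_le (i+2)).trans ?_
    have hcast : (((i+2:ℕ)):ℝ) = (i:ℝ)+2 := by push_cast; ring
    rw [hcast]
    set r : ℝ := (i:ℝ) with hr
    have hr0 : (0:ℝ) ≤ r := by positivity
    have hsub : 2/(r+1) - 2/(r+2) = 2/((r+1)*(r+2)) := by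
      field_simp
      ring
    rw [hsub]
    rw [div_le_div_iff₀ (by positivity) (by positivity)]
    have h3 : (r+2)^3 ≤ (r+2)^10 := pow_le_pow_right₀ (by linarith) (by norm_num)
    nlinarith [sq_nonneg r, sq_nonneg (r+1)]
  calc ∑ i ∈ Finset.range n, |aterm (i+2)|
      ≤ ∑ i ∈ Finset.range n, (2/((i:ℝ)+1) - 2/((i:ℝ)+2)) :=
        Finset.sum_le_sum (fun i _ => hterm i)
    _ = 2/(((0:ℕ):ℝ)+1) - 2/((n:ℝ)+1) := by
        have := Finset.sum_range_sub' (f := fun i : ℕ => 2/((i:ℝ)+1)) n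
        rw [← this]
        apply Finset.sum_congr rfl
        intro i _
        push_cast
        ring_nf
    _ ≤ 2 := by
        have : (0:ℝ) ≤ 2/((n:ℝ)+1) := by positivity
        norm_num
        linarith

lemma c_pos : 0 < ∑' d, aterm d := by
  have h0 := Summable.tsum_eq_zero_add summable_aterm
  have h1 := Summable.tsum_eq_zero_add ((summable_nat_add_iff 1).mpr summable_aterm)
  have ha0 : aterm 0 = 0 := by simp [aterm]
  have ha1 : aterm 1 = 4 := by
    rw [aterm]
    simp [ArithmeticFunction.moebius_apply_one]
  have hshift : (fun d : ℕ => aterm (d + 1 + 1)) = (fun d : ℕ => aterm (d + 2)) := by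
    funext d
    norm_num
  rw [h0, ha0, zero_add, h1, ha1, hshift] at *
  have := tail_bound
  have h2 : -2 ≤ ∑' d : ℕ, aterm (d+2) := by
    rw [abs_le] at this
    exact this.1
  linarith

lemma abs_cast_le_iff (A : ℤ) (y : ℝ) : |(A:ℝ)| ≤ y ↔ (-⌊y⌋ ≤ A ∧ A ≤ ⌊y⌋) := by
  rw [abs_le]
  constructor
  · rintro ⟨h1, h2⟩
    refine ⟨?_, Int.le_floor.mpr h2⟩
    rw [neg_le]
    exact Int.le_floor.mpr (by push_cast; linarith)
  · rintro ⟨h1, h2⟩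
    have h2' : (A:ℝ) ≤ ⌊y⌋ := by exact_mod_cast h2
    have h1' : ((-A : ℤ):ℝ) ≤ ⌊y⌋ := by exact_mod_cast neg_le.mp h1
    have hfl : ((⌊y⌋:ℤ):ℝ) ≤ y := Int.floor_le y
    constructor
    · push_cast at h1'
      linarith
    · linarith

lemma ncard_set_eq (x : ℝ) :
    ({AB : ℤ × ℤ | |(AB.1 : ℝ)| ≤ x ^ 2 ∧ |(AB.2 : ℝ)| ≤ x ^ 3 ∧
        4 * AB.1 ^ 3 + 27 * AB.2 ^ 2 ≠ 0 ∧
        ¬ ∃ p : ℕ, p.Prime ∧ (p : ℤ) ^ 4 ∣ AB.1 ∧ (p : ℤ) ^ 6 ∣ AB.2}).ncard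
      = (NN x).card := by
  classical
  rw [← Set.ncard_coe_finset (NN x)]
  congr 1
  ext AB
  simp only [Set.mem_setOf_eq, Finset.coe_filter, NN, Box, Finset.mem_coe, Finset.mem_filter,
    Finset.mem_product, Finset.mem_Icc]
  rw [abs_cast_le_iff AB.1 (x^2), abs_cast_le_iff AB.2 (x^3)]
  tauto

/-- The number of elliptic curves over `ℚ` of height at most `x`, i.e. the set
of pairs `(A, B)` of integers with `|A| ≤ x²`, `|B| ≤ x³`, `4A³ + 27B² ≠ 0`,
and no prime `p` with `p⁴ ∣ A` and `p⁶ ∣ B`,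
is asymptotic to `c · x⁵` for some constant `c > 0`. -/
theorem count_minimal_weierstrass_asymptotic :
    ∃ c : ℝ, 0 < c ∧
      Tendsto (fun x : ℝ =>
        (({AB : ℤ × ℤ | |(AB.1 : ℝ)| ≤ x ^ 2 ∧ |(AB.2 : ℝ)| ≤ x ^ 3 ∧
            4 * AB.1 ^ 3 + 27 * AB.2 ^ 2 ≠ 0 ∧
            ¬ ∃ p : ℕ, p.Prime ∧ (p : ℤ) ^ 4 ∣ AB.1 ∧ (p : ℤ) ^ 6 ∣ AB.2}.ncard : ℝ)
          / x ^ 5)) atTop (nhds c) := by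
  refine ⟨∑' d, aterm d, c_pos, ?_⟩
  have htt := tendsto_tsum_of_dominated_convergence summable_bound tendsto_fterm fterm_bound
  apply htt.congr'
  filter_upwards [eventually_ge_atTop (1:ℝ)] with x hx
  rw [← tsum_fterm hx, ncard_set_eq x]
end

section
/- Let V be a finite-dimensional vector space over ℚ, let M ⊆ V be a finitely generated ℤ-submodule, let f ∈ M be a nonzero element, and let W ⊆ V be a ℚ-linear subspace such that V is the internal direct sum of the line ℚ·f and W. Set B = M ∩ W. Then the quotient group M/(ℤ·f + B) is finite, and its order equals the greatest positive integer r for which there exists g ∈ B with f − g ∈ r·M. -/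
lemma fg_submodule_rat_principal (M' : Submodule ℤ ℚ) (h : M'.FG) :
    ∃ q : ℚ, M' = Submodule.span ℤ {q} := by
  classical
  obtain ⟨s, hs⟩ := h
  set n : ℤ := ∏ x ∈ s, (x.den : ℤ) with hn
  have hnpos : 0 < n := Finset.prod_pos (fun x _ => by exact_mod_cast x.pos)
  have hn0 : (n : ℚ) ≠ 0 := by exact_mod_cast hnpos.ne'
  -- every element of M' has n * x an integer
  have hint : ∀ x ∈ M', ∃ k : ℤ, (n : ℚ) * x = k := by
    intro x hx
    rw [← hs] at hx
    refine Submodule.span_induction (p := fun x _ => ∃ k : ℤ, (n : ℚ) * x = k) ?_ ?_ ?_ ?_ hx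
    · intro y hy
      obtain ⟨t, ht⟩ : (y.den : ℤ) ∣ n := Finset.dvd_prod_of_mem _ hy
      refine ⟨t * y.num, ?_⟩
      push_cast [ht]
      rw [mul_comm (y.den : ℚ) (t : ℚ), mul_assoc, Rat.den_mul_eq_num y]
    · exact ⟨0, by simp⟩
    · rintro a b _ _ ⟨ka, hka⟩ ⟨kb, hkb⟩
      exact ⟨ka + kb, by push_cast; rw [mul_add, hka, hkb]⟩
    · rintro a x _ ⟨k, hk⟩
      refine ⟨a * k, ?_⟩
      rw [zsmul_eq_mul]
      push_cast
      rw [mul_left_comm, hk]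
  -- the ideal of numerators
  let I : Ideal ℤ :=
  { carrier := {k : ℤ | (k : ℚ) / (n : ℚ) ∈ M'}
    add_mem' := by
      intro a b ha hb
      simpa [add_div] using M'.add_mem ha hb
    zero_mem' := by simp
    smul_mem' := by
      intro c x hx
      have := M'.smul_mem c hx
      simpa [zsmul_eq_mul, mul_div_assoc] using this }
  obtain ⟨a, ha⟩ := (IsPrincipalIdealRing.principal I).principal
  refine ⟨(a : ℚ) / (n : ℚ), le_antisymm ?_ ?_⟩
  · intro x hx
    obtain ⟨k, hk⟩ := hint x hx
    have hkI : k ∈ I := by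
      show (k : ℚ) / (n : ℚ) ∈ M'
      rw [← hk, mul_comm, mul_div_assoc, div_self hn0, mul_one]
      exact hx
    rw [ha, Submodule.mem_span_singleton] at hkI
    obtain ⟨c, hc⟩ := hkI
    rw [zsmul_eq_mul] at hc
    rw [Submodule.mem_span_singleton]
    refine ⟨c, ?_⟩
    have hx' : x = (k : ℚ) / n := by
      field_simp [← hk]
      linarith
    rw [hx', ← hc, zsmul_eq_mul]
    push_cast
    ring
  · rw [Submodule.span_le, Set.singleton_subset_iff]
    have haI : a ∈ I := by rw [ha]; exact Submodule.mem_span_singleton_self a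
    exact haI

/-- Let `V` be a finite-dimensional `ℚ`-vector space, `M ⊆ V` a finitely
generated `ℤ`-submodule, `f ∈ M` a nonzero element, and `W ⊆ V` a `ℚ`-subspace
such that `V = ℚ·f ⊕ W` internally. Set `B = M ∩ W`. Then `M/(ℤ·f + B)` is
finite, and its order is the greatest positive integer `r` such that `f ≡ g
(mod r·M)` for some `g ∈ B`. -/
theorem congruence_number_eq_card_quotient
    (V : Type*) [AddCommGroup V] [Module ℚ V] [FiniteDimensional ℚ V]
    (M : Submodule ℤ V) (hMfg : M.FG) (f : V) (hfM : f ∈ M) (hf0 : f ≠ 0)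
    (W : Submodule ℚ V) (hcompl : IsCompl (Submodule.span ℚ {f}) W) :
    Finite (↥M ⧸ (Submodule.comap M.subtype
        (Submodule.span ℤ {f} ⊔ (M ⊓ W.restrictScalars ℤ)))) ∧
    IsGreatest
      {r : ℕ | 0 < r ∧ ∃ g ∈ M ⊓ W.restrictScalars ℤ, ∃ m ∈ M, f - g = (r : ℤ) • m}
      (Nat.card (↥M ⧸ (Submodule.comap M.subtype
        (Submodule.span ℤ {f} ⊔ (M ⊓ W.restrictScalars ℤ))))) := by
  classical
  -- the ℚ-linear coordinate functional along f
  set π : V →ₗ[ℚ] ℚ :=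
    (LinearEquiv.coord ℚ V f hf0).toLinearMap ∘ₗ
      Submodule.linearProjOfIsCompl (Submodule.span ℚ {f}) W hcompl with hπdef
  have hπf : π f = 1 := by
    have h1 : Submodule.linearProjOfIsCompl (Submodule.span ℚ {f}) W hcompl f
        = (⟨f, Submodule.mem_span_singleton_self f⟩ : Submodule.span ℚ {f}) :=
      Submodule.linearProjOfIsCompl_apply_left hcompl
        (⟨f, Submodule.mem_span_singleton_self f⟩ : Submodule.span ℚ {f})
    simp only [hπdef, LinearMap.comp_apply, h1, LinearEquiv.coe_coe]
    exact LinearEquiv.coord_self ℚ V f hf0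
  have hπW : ∀ x, (π x = 0 ↔ x ∈ W) := by
    intro x
    constructor
    · intro hx
      have : Submodule.linearProjOfIsCompl (Submodule.span ℚ {f}) W hcompl x = 0 := by
        apply (LinearEquiv.coord ℚ V f hf0).injective
        simpa [hπdef] using hx
      exact (Submodule.linearProjOfIsCompl_apply_eq_zero_iff hcompl).1 this
    · intro hx
      have h0 : Submodule.linearProjOfIsCompl (Submodule.span ℚ {f}) W hcompl x = 0 :=
        Submodule.projectionOnto_apply_of_mem_right hcompl hx
      rw [hπdef, LinearMap.comp_apply, h0, map_zero]
  -- the image of M under π, a f.g. ℤ-submodule of ℚ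
  set πz : V →ₗ[ℤ] ℚ := π.restrictScalars ℤ with hπz
  set M' : Submodule ℤ ℚ := Submodule.map πz M with hM'
  have hM'fg : M'.FG := hMfg.map πz
  obtain ⟨q, hq⟩ := fg_submodule_rat_principal M' hM'fg
  have h1M' : (1 : ℚ) ∈ M' := ⟨f, hfM, hπf⟩
  obtain ⟨c, hc⟩ : ∃ c : ℤ, c • q = 1 := (Submodule.mem_span_singleton).1 (hq ▸ h1M')
  rw [zsmul_eq_mul] at hc
  have hc0 : c ≠ 0 := by rintro rfl; simp at hc
  have hcq : (c : ℚ) ≠ 0 := Int.cast_ne_zero.2 hc0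
  set d : ℕ := c.natAbs with hd
  have hdpos : 0 < d := Int.natAbs_pos.2 hc0
  -- every element of M' becomes an integer after multiplying by c
  have hint : ∀ x ∈ M', ∃ k : ℤ, (c : ℚ) * x = k ∧ x = (k : ℚ) / c := by
    intro x hx
    rw [hq, Submodule.mem_span_singleton] at hx
    obtain ⟨t, ht⟩ := hx
    rw [zsmul_eq_mul] at ht
    refine ⟨t, ?_, ?_⟩
    · rw [← ht, mul_left_comm, hc, mul_one]
    · rw [← ht]
      have hq' : q = 1 / c := by field_simp [← hc]; linarith
      rw [hq']
      field_simp
  set N := Submodule.comap M.subtype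
      (Submodule.span ℤ {f} ⊔ (M ⊓ W.restrictScalars ℤ)) with hN
  have hmem : ∀ m : ↥M, (π m.val) ∈ M' := fun m => ⟨m.val, m.2, rfl⟩
  have hwit : ∀ m : ↥M, ∃ k : ℤ, (c:ℚ) * π m.val = k :=
    fun m => (hint _ (hmem m)).imp (fun k hk => hk.1)
  let ψ₀ : ↥M →+ ℤ :=
  { toFun := fun m => ((c : ℚ) * π m.val).num
    map_zero' := by simp
    map_add' := by
      intro a b
      show ((c:ℚ) * π ((a+b : ↥M) : V)).num
          = ((c:ℚ) * π a.val).num + ((c:ℚ) * π b.val).num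
      obtain ⟨ka, hka⟩ := hwit a
      obtain ⟨kb, hkb⟩ := hwit b
      have h1 : (c:ℚ) * π ((a+b : ↥M) : V) = ((ka + kb : ℤ) : ℚ) := by
        rw [Submodule.coe_add, map_add, mul_add, hka, hkb]
        push_cast
        ring
      rw [h1, hka, hkb, Rat.num_intCast, Rat.num_intCast, Rat.num_intCast] }
  have hψeval : ∀ m : ↥M, ((ψ₀ m : ℤ) : ℚ) = (c:ℚ) * π m.val := by
    intro m
    obtain ⟨k, hk⟩ := hwit m
    show ((((c:ℚ) * π m.val).num : ℤ) : ℚ) = _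
    rw [hk, Rat.num_intCast]
  let ψ : ↥M →ₗ[ℤ] ℤ := ψ₀.toIntLinearMap
  let Ψ : ↥M →ₗ[ℤ] (ℤ ⧸ Ideal.span ({c} : Set ℤ)) :=
    ((Ideal.span ({c} : Set ℤ)).mkQ).comp ψ
  -- surjectivity
  have hsurjψ : Function.Surjective ψ := by
    intro k
    have hkq : (k : ℤ) • q ∈ M' := by
      rw [hq]; exact Submodule.smul_mem _ _ (Submodule.mem_span_singleton_self q)
    obtain ⟨x, hxM, hxq⟩ := hkq
    refine ⟨⟨x, hxM⟩, ?_⟩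
    have h2 : (c:ℚ) * π x = ((k : ℤ) : ℚ) := by
      have : π x = (k : ℤ) • q := hxq
      rw [this, zsmul_eq_mul, mul_left_comm, hc, mul_one]
    have := hψeval ⟨x, hxM⟩
    rw [h2] at this
    exact_mod_cast this
  have hΨsurj : Function.Surjective Ψ := (Submodule.mkQ_surjective _).comp hsurjψ
  -- kernel computation
  have hkerΨ : LinearMap.ker Ψ = N := by
    ext m
    have hmk : Ψ m = 0 ↔ (c : ℤ) ∣ ψ m := by
      rw [show Ψ m = Submodule.Quotient.mk (ψ m) from rfl, Submodule.Quotient.mk_eq_zero,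
        Ideal.mem_span_singleton]
    constructor
    · intro hmker
      obtain ⟨a, hac⟩ := hmk.1 hmker
      have hπm : π m.val = (a : ℚ) := by
        have h3 := hψeval m
        have hac' : ψ₀ m = c * a := hac
        rw [hac'] at h3
        push_cast at h3
        exact (mul_left_cancel₀ hcq h3).symm
      have hbW : m.val - (a : ℤ) • f ∈ W := by
        rw [← hπW]
        rw [map_sub, map_zsmul, hπm, hπf, zsmul_eq_mul, mul_one, sub_self]
      have hbM : m.val - (a : ℤ) • f ∈ M := M.sub_mem m.2 (M.smul_mem a hfM)
      show m.val ∈ Submodule.span ℤ {f} ⊔ (M ⊓ W.restrictScalars ℤ)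
      refine Submodule.mem_sup.2 ⟨(a : ℤ) • f,
        Submodule.smul_mem _ _ (Submodule.mem_span_singleton_self f),
        m.val - (a : ℤ) • f, ⟨hbM, hbW⟩, by abel⟩
    · intro hmN
      obtain ⟨y, hy, b, hb, hyb⟩ := Submodule.mem_sup.1 hmN
      obtain ⟨a, ha⟩ := Submodule.mem_span_singleton.1 hy
      have hyb' : y + b = (m : V) := hyb
      have hπm : π m.val = (a : ℚ) := by
        rw [← hyb', map_add, ← ha, map_zsmul, hπf, (hπW b).2 hb.2, add_zero,
          zsmul_eq_mul, mul_one]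
      apply hmk.2
      refine ⟨a, ?_⟩
      have h3 := hψeval m
      rw [hπm] at h3
      exact_mod_cast h3
  -- the isomorphism with ZMod d
  let e1 : (↥M ⧸ N) ≃ₗ[ℤ] (ℤ ⧸ Ideal.span ({c} : Set ℤ)) :=
    (Submodule.quotEquivOfEq N (LinearMap.ker Ψ) hkerΨ.symm).trans
      (Ψ.quotKerEquivOfSurjective hΨsurj)
  let e2 : (↥M ⧸ N) ≃+ ZMod d :=
    e1.toAddEquiv.trans (Int.quotientSpanEquivZMod c).toAddEquiv
  have : NeZero d := ⟨hdpos.ne'⟩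
  have hcard : Nat.card (↥M ⧸ N) = d := by
    rw [Nat.card_congr e2.toEquiv, Nat.card_zmod]
  constructor
  · exact Finite.of_equiv _ e2.symm.toEquiv
  · rw [hcard]
    constructor
    · -- d is in the set
      refine ⟨hdpos, ?_⟩
      have hqM' : q ∈ M' := by
        rw [hq]; exact Submodule.mem_span_singleton_self q
      obtain ⟨x, hxM, hxq⟩ := hqM'
      have hπx : π x = q := hxq
      have hgM : f - c • x ∈ M := M.sub_mem hfM (M.smul_mem c hxM)
      have hgW : f - c • x ∈ W := by
        rw [← hπW, map_sub, map_zsmul, hπx, hπf, zsmul_eq_mul, hc, sub_self]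
      refine ⟨f - c • x, Submodule.mem_inf.2 ⟨hgM, hgW⟩, c.sign • x,
        M.smul_mem _ hxM, ?_⟩
      rw [sub_sub_cancel, smul_smul]
      congr 1
      rw [mul_comm]
      exact (Int.sign_mul_natAbs c).symm
    · -- upper bound
      rintro r ⟨hr, g, hg, m, hm, hfg⟩
      have hπm : (1 : ℚ) = (r : ℚ) * π m := by
        have := congrArg π hfg
        rw [map_sub, hπf, (hπW g).2 hg.2, sub_zero, map_zsmul, zsmul_eq_mul] at this
        exact_mod_cast this
      obtain ⟨k, hk, -⟩ := hint (π m) ⟨m, hm, rfl⟩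
      have hck : (c : ℤ) = (r : ℤ) * k := by
        have h4 : (c : ℚ) = (r : ℚ) * ((c:ℚ) * π m) := by
          rw [mul_left_comm, ← hπm, mul_one]
        rw [hk] at h4
        exact_mod_cast h4
      have hdvd : (r : ℤ) ∣ (d : ℤ) := Int.dvd_natAbs.2 ⟨k, hck⟩
      have : (r : ℤ) ≤ (d : ℤ) :=
        Int.le_of_dvd (by exact_mod_cast hdpos) hdvd
      exact_mod_cast this
end
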